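/- arXiv:2108.11237 — 3 statements merged into one kernel-verified Lean document; each statement's English description precedes it below -/
import Mathlib

section
/- Consider the forward-backward system dy/ds = A(y) − B N⁻¹ B* z(s), −dz/ds = (DA(y(s)))* z(s) + DF(y(s)) on [t, T] with y(t) = x, z(T) = DF_T(y(T)). Assume A(0)=0, ‖DA‖≤γ, |A(x)−DA(x)x| ≤ (b/2)|x|, ν|ξ|² ≤ (D²F ξ,ξ), DF(0)=0, ν_T|ξ|² ≤ (D²F_T ξ,ξ) ≤ M_T|ξ|², DF_T(0)=0, (BN⁻¹B*ξ,ξ) ≥ m|ξ|², and b²/16 < (m−k)(ν−k) for some 0 < k < min(m, ν). Then any solution satisfies (x, z(t)) ≥ ν_T |y(T)|² + k ∫ₜᵀ (|y(s)|² + |z(s)|²) ds. -/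
/-!
Along a solution, `d/ds ⟪y, z⟫ = ⟪A y - DA(y) y, z⟫ - ⟪S z, z⟫ - ⟪y, ∇F y⟫`. The first term is at
most `(b/2)|y||z|`, the other two at most `-m|z|²` and `-ν|y|²` (convexity of `F` and `∇F 0 = 0`),
and the condition `b²/16 < (m-k)(ν-k)` absorbs the cross term, so `d/ds ⟪y, z⟫ ≤ -k(|y|² + |z|²)`.
Integrating over `[t, T]` and using `⟪y T, ∇F_T (y T)⟫ ≥ ν_T |y T|²` gives the estimate.
-/

open Set intervalIntegral ContinuousLinearMap
open scoped RealInnerProductSpace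

theorem mul_mul_le_of_sq_le_four_mul {p q c : ℝ} (hp : 0 < p) (hc : c ^ 2 ≤ 4 * p * q) (u w : ℝ) :
    c * u * w ≤ p * u ^ 2 + q * w ^ 2 := by
  -- `4p (p u² + q w² - c u w) = (2p u - c w)² + (4pq - c²) w²`
  nlinarith [sq_nonneg (2 * p * u - c * w), mul_nonneg (sub_nonneg.2 hc) (sq_nonneg w)]

section

variable {H : Type*} [NormedAddCommGroup H] [InnerProductSpace ℝ H] [CompleteSpace H]

theorem mul_norm_sq_le_inner_gradient_sub {F : H → ℝ} {ν : ℝ}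
    (hF : Differentiable ℝ (fderiv ℝ F))
    (hlow : ∀ x ξ : H, ν * ‖ξ‖ ^ 2 ≤ fderiv ℝ (fun y => fderiv ℝ F y) x ξ ξ) (v w : H) :
    ν * ‖v - w‖ ^ 2 ≤ ⟪v - w, gradient F v - gradient F w⟫ := by
  set d := v - w
  set φ : ℝ → ℝ := fun r => fderiv ℝ F (w + r • d) d
  have hφ : ∀ r, HasDerivAt φ (fderiv ℝ (fderiv ℝ F) (w + r • d) d d) r := fun r => by
    have hline : HasDerivAt (fun r : ℝ => w + r • d) d r := by
      simpa using ((hasDerivAt_id r).smul_const d).const_add w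
    exact (apply ℝ ℝ d).hasFDerivAt.comp_hasDerivAt r
      ((hF _).hasFDerivAt.comp_hasDerivAt r hline)
  have hmvt := mul_sub_le_image_sub_of_le_deriv (fun r => (hφ r).differentiableAt)
    (fun r => (hφ r).deriv ▸ hlow _ _) zero_le_one
  have hφ1 : φ 1 = ⟪gradient F v, d⟫ := by simp [φ, d, inner_gradient_left]
  have hφ0 : φ 0 = ⟪gradient F w, d⟫ := by simp [φ, inner_gradient_left]
  rw [real_inner_comm, inner_sub_left, ← hφ1, ← hφ0]
  linarith

theorem mul_norm_sq_le_inner_gradient {F : H → ℝ} {ν : ℝ} (hF : ContDiff ℝ 2 F)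
    (h0 : gradient F 0 = 0)
    (hlow : ∀ x ξ : H, ν * ‖ξ‖ ^ 2 ≤ fderiv ℝ (fun y => fderiv ℝ F y) x ξ ξ) (v : H) :
    ν * ‖v‖ ^ 2 ≤ ⟪v, gradient F v⟫ := by
  simpa [h0] using mul_norm_sq_le_inner_gradient_sub
    ((hF.fderiv_right (m := 1) le_rfl).differentiable one_ne_zero) hlow v 0

theorem inner_deriv_forwardBackward_le (L S : H →L[ℝ] H) (a u w g : H) {b m ν k : ℝ}
    (hkmin : k < min m ν) (hYoung : b ^ 2 / 16 < (m - k) * (ν - k))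
    (ha : ‖a - L u‖ ≤ (b / 2) * ‖u‖) (hS : m * ‖w‖ ^ 2 ≤ ⟪S w, w⟫)
    (hg : ν * ‖u‖ ^ 2 ≤ ⟪u, g⟫) :
    ⟪u, -(adjoint L w + g)⟫ + ⟪a - S w, w⟫ ≤ -k * (‖u‖ ^ 2 + ‖w‖ ^ 2) := by
  have hcross : ⟪a - L u, w⟫ ≤ (b / 2) * ‖u‖ * ‖w‖ :=
    (real_inner_le_norm _ _).trans (mul_le_mul_of_nonneg_right ha (norm_nonneg w))
  have hyoung : (b / 2) * ‖u‖ * ‖w‖ ≤ (ν - k) * ‖u‖ ^ 2 + (m - k) * ‖w‖ ^ 2 :=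
    mul_mul_le_of_sq_le_four_mul (by linarith [min_le_right m ν]) (by linarith) _ _
  have hexpand : ⟪u, -(adjoint L w + g)⟫ + ⟪a - S w, w⟫
      = ⟪a - L u, w⟫ - ⟪S w, w⟫ - ⟪u, g⟫ := by
    simp only [inner_neg_right, inner_add_right, inner_sub_left, adjoint_inner_right]
    ring
  rw [hexpand]
  linarith

end

theorem inner_add_integral_le_of_deriv_le {E : Type*} [NormedAddCommGroup E]
    [InnerProductSpace ℝ E] {y z y' z' : ℝ → E} {t T k : ℝ} (htT : t ≤ T)
    (hy : ∀ s ∈ Icc t T, HasDerivAt y (y' s) s) (hz : ∀ s ∈ Icc t T, HasDerivAt z (z' s) s)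
    (hle : ∀ s ∈ Ioo t T, ⟪y s, z' s⟫ + ⟪y' s, z s⟫ ≤ -k * (‖y s‖ ^ 2 + ‖z s‖ ^ 2)) :
    ⟪y T, z T⟫ + k * ∫ s in t..T, (‖y s‖ ^ 2 + ‖z s‖ ^ 2) ≤ ⟪y t, z t⟫ := by
  have hyc : ContinuousOn y (Icc t T) := fun s hs => (hy s hs).continuousAt.continuousWithinAt
  have hzc : ContinuousOn z (Icc t T) := fun s hs => (hz s hs).continuousAt.continuousWithinAt
  have hbound : ContinuousOn (fun s => -k * (‖y s‖ ^ 2 + ‖z s‖ ^ 2)) (Icc t T) :=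
    continuousOn_const.mul ((hyc.norm.pow 2).add (hzc.norm.pow 2))
  have hftc := sub_le_integral_of_hasDeriv_right_of_le htT (hyc.inner hzc)
    (fun s hs => ((hy s (Ioo_subset_Icc_self hs)).inner ℝ
      (hz s (Ioo_subset_Icc_self hs))).hasDerivWithinAt)
    hbound.integrableOn_Icc hle
  rw [integral_const_mul] at hftc
  linarith

theorem stmt9_general
    {H : Type*} [NormedAddCommGroup H] [InnerProductSpace ℝ H] [CompleteSpace H]
    (A : H → H) (F F_T : H → ℝ) (S : H →L[ℝ] H)
    (b ν ν_T m k : ℝ)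
    (hkmin : k < min m ν)
    (hYoung : b ^ 2 / 16 < (m - k) * (ν - k))
    (hAquad : ∀ x : H, ‖A x - fderiv ℝ A x x‖ ≤ (b / 2) * ‖x‖)
    (hFC2 : ContDiff ℝ 2 F) (hFTC2 : ContDiff ℝ 2 F_T)
    (hDF0 : gradient F 0 = 0) (hDFT0 : gradient F_T 0 = 0)
    (hFlow : ∀ x ξ : H, ν * ‖ξ‖ ^ 2 ≤ fderiv ℝ (fun y => fderiv ℝ F y) x ξ ξ)
    (hFTlow : ∀ x ξ : H, ν_T * ‖ξ‖ ^ 2 ≤ fderiv ℝ (fun y => fderiv ℝ F_T y) x ξ ξ)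
    (hScoer : ∀ ξ : H, m * ‖ξ‖ ^ 2 ≤ ⟪S ξ, ξ⟫)
    (t T : ℝ) (htT : t ≤ T) (x : H)
    (y z : ℝ → H)
    (hy : ∀ s ∈ Icc t T, HasDerivAt y (A (y s) - S (z s)) s)
    (hz : ∀ s ∈ Icc t T,
      HasDerivAt z (-((adjoint (fderiv ℝ A (y s))) (z s) + gradient F (y s))) s)
    (hyt : y t = x) (hzT : z T = gradient F_T (y T)) :
    ⟪x, z t⟫ ≥ ν_T * ‖y T‖ ^ 2 + k * ∫ s in t..T, (‖y s‖ ^ 2 + ‖z s‖ ^ 2) := by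
  have hterminal : ν_T * ‖y T‖ ^ 2 ≤ ⟪y T, z T⟫ :=
    hzT ▸ mul_norm_sq_le_inner_gradient hFTC2 hDFT0 hFTlow (y T)
  have henergy := inner_add_integral_le_of_deriv_le htT hy hz fun s _ =>
    inner_deriv_forwardBackward_le _ S _ _ _ _ hkmin hYoung (hAquad (y s)) (hScoer (z s))
      (mul_norm_sq_le_inner_gradient hFC2 hDF0 hFlow (y s))
  rw [hyt] at henergy
  linarith

theorem stmt9
    {H : Type*} [NormedAddCommGroup H] [InnerProductSpace ℝ H] [CompleteSpace H]
    (A : H → H) (F F_T : H → ℝ) (S : H →L[ℝ] H)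
    (γ b ν ν_T M_T m k : ℝ)
    (hγ : 0 < γ) (hb : 0 < b) (hν : 0 < ν) (hνT : 0 < ν_T) (hMT : 0 < M_T)
    (hm : 0 < m) (hk : 0 < k) (hkmin : k < min m ν)
    (hYoung : b ^ 2 / 16 < (m - k) * (ν - k))
    (hC1 : ContDiff ℝ 1 A) (hA0 : A 0 = 0)
    (hDA : ∀ x : H, ‖fderiv ℝ A x‖ ≤ γ)
    (hAquad : ∀ x : H, ‖A x - fderiv ℝ A x x‖ ≤ (b / 2) * ‖x‖)
    (hFC2 : ContDiff ℝ 2 F) (hFTC2 : ContDiff ℝ 2 F_T)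
    (hDF0 : gradient F 0 = 0) (hDFT0 : gradient F_T 0 = 0)
    (hFlow : ∀ x ξ : H, ν * ‖ξ‖ ^ 2 ≤ fderiv ℝ (fun y => fderiv ℝ F y) x ξ ξ)
    (hFTlow : ∀ x ξ : H, ν_T * ‖ξ‖ ^ 2 ≤ fderiv ℝ (fun y => fderiv ℝ F_T y) x ξ ξ)
    (hFTup : ∀ x ξ : H, fderiv ℝ (fun y => fderiv ℝ F_T y) x ξ ξ ≤ M_T * ‖ξ‖ ^ 2)
    (hSsa : ∀ ξ η : H, ⟪S ξ, η⟫ = ⟪ξ, S η⟫)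
    (hScoer : ∀ ξ : H, m * ‖ξ‖ ^ 2 ≤ ⟪S ξ, ξ⟫)
    (t T : ℝ) (htT : t ≤ T) (x : H)
    (y z : ℝ → H)
    (hy : ∀ s ∈ Icc t T, HasDerivAt y (A (y s) - S (z s)) s)
    (hz : ∀ s ∈ Icc t T,
      HasDerivAt z (-((adjoint (fderiv ℝ A (y s))) (z s) + gradient F (y s))) s)
    (hyt : y t = x) (hzT : z T = gradient F_T (y T)) :
    ⟪x, z t⟫ ≥ ν_T * ‖y T‖ ^ 2 + k * ∫ s in t..T, (‖y s‖ ^ 2 + ‖z s‖ ^ 2) :=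
  stmt9_general A F F_T S b ν ν_T m k hkmin hYoung hAquad hFC2 hFTC2 hDF0 hDFT0 hFlow hFTlow hScoer
    t T htT x y z hy hz hyt hzT
end

section
/- Under the assumptions of the first a priori estimate (coercivity constants ν, ν_T, m, bound γ on ‖DA‖, bound M on D²F, bound M_T on D²F_T, the Young-inequality condition b²/16 < (m−k)(ν−k) for 0<k<min(m,ν)), any solution (y, z) of the forward-backward system with y(t) = x satisfies |z(t)| ≤ |x| · ( M_T²/ν_T + (γ² + M²)(T − t)/k ). -/
open Set intervalIntegral ContinuousLinearMap
open scoped RealInnerProductSpace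

/-!
Along a solution, `d/ds ⟪y, z⟫ ≤ -k (‖y‖² + ‖z‖²)`: the coercivity of `S` and of `D²F` absorbs,
by Young's inequality, the defect `A y - DA(y) y`. Integrating over `[t, T]` bounds
`k ∫ (‖y‖² + ‖z‖²)` by `⟪x, z t⟫ - ⟪y T, z T⟫`. The terminal condition gives
`‖z T‖² ≤ (M_T² / ν_T) ⟪y T, z T⟫`, and the backward equation with Cauchy–Schwarz in time gives
`‖z t - z T‖² ≤ ((γ² + M²)(T - t) / k) · k ∫ (‖y‖² + ‖z‖²)`. Adding the two square roots,
`‖z t‖² ≤ (M_T² / ν_T + (γ² + M²)(T - t) / k) ⟪x, z t⟫`.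
-/

lemma half_mul_mul_le_mul_sq_add_mul_sq {b p q : ℝ} (hq : 0 < q) (h : b ^ 2 / 16 ≤ p * q)
    (u v : ℝ) :
    b / 2 * (u * v) ≤ q * u ^ 2 + p * v ^ 2 := by
  have : 0 ≤ 4 * q * (q * u ^ 2 + p * v ^ 2 - b / 2 * (u * v)) := by
    nlinarith [sq_nonneg (2 * q * u - b / 2 * v), sq_nonneg v]
  nlinarith

lemma le_mul_add_of_sq_le {Z u v a c P R X : ℝ} (hX : 0 ≤ X) (hZ : 0 ≤ Z) (hu : 0 ≤ u)
    (hv : 0 ≤ v) (ha : 0 ≤ a) (hc : 0 ≤ c) (hP : 0 ≤ P) (hR : 0 ≤ R) (hZuv : Z ≤ u + v)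
    (huP : u ^ 2 ≤ a * P) (hvR : v ^ 2 ≤ c * R) (hPR : P + R ≤ X * Z) :
    Z ≤ X * (a + c) := by
  have hcross : 2 * (u * v) ≤ a * R + c * P := by
    have : (2 * (u * v)) ^ 2 ≤ (a * R + c * P) ^ 2 := by
      nlinarith [sq_nonneg (a * R - c * P), mul_le_mul huP hvR (sq_nonneg v) (by positivity)]
    exact abs_le_of_sq_le_sq' this (by positivity) |>.2
  have hZsq : Z * Z ≤ (X * (a + c)) * Z := by
    nlinarith [mul_le_mul hZuv hZuv hZ (by positivity)]
  rcases hZ.eq_or_lt with rfl | hZpos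
  · positivity
  · exact le_of_mul_le_mul_right hZsq hZpos

lemma sq_intervalIntegral_le_mul_integral_sq {f : ℝ → ℝ} {a b : ℝ} (hab : a ≤ b)
    (hf : IntervalIntegrable f MeasureTheory.volume a b)
    (hf2 : IntervalIntegrable (fun s => f s ^ 2) MeasureTheory.volume a b) :
    (∫ s in a..b, f s) ^ 2 ≤ (b - a) * ∫ s in a..b, f s ^ 2 := by
  have hquad : ∀ ε : ℝ,
      0 ≤ (b - a) * (ε * ε) + (-2 * ∫ s in a..b, f s) * ε + ∫ s in a..b, f s ^ 2 := by
    intro ε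
    have hexp : ∫ s in a..b, (f s - ε) ^ 2 =
        (b - a) * (ε * ε) + (-2 * ∫ s in a..b, f s) * ε + ∫ s in a..b, f s ^ 2 := by
      have : ∀ s, (f s - ε) ^ 2 = f s ^ 2 - (2 * ε) * f s + ε * ε := fun s => by ring
      simp only [this]
      rw [integral_add (hf2.sub (hf.const_mul _)) intervalIntegrable_const,
        integral_sub hf2 (hf.const_mul _), integral_const_mul, integral_const, smul_eq_mul]
      ring
    exact hexp ▸ integral_nonneg hab fun s _ => sq_nonneg _
  have := discrim_le_zero hquad
  rw [discrim] at this
  nlinarith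

lemma norm_sub_sq_le_mul_integral_of_norm_deriv_sq_le {E : Type*} [NormedAddCommGroup E]
    [NormedSpace ℝ E] [CompleteSpace E] {f f' : ℝ → E} {g : ℝ → ℝ} {a b : ℝ} (hab : a ≤ b)
    (hf : ∀ s ∈ Icc a b, HasDerivAt f (f' s) s) (hf' : ContinuousOn f' (Icc a b))
    (hg : ContinuousOn g (Icc a b)) (hf'g : ∀ s ∈ Icc a b, ‖f' s‖ ^ 2 ≤ g s) :
    ‖f b - f a‖ ^ 2 ≤ (b - a) * ∫ s in a..b, g s := by
  rw [← uIcc_of_le hab] at hf hf' hg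
  have hFTC : ∫ s in a..b, f' s = f b - f a :=
    integral_eq_sub_of_hasDerivAt hf (hf'.intervalIntegrable)
  calc ‖f b - f a‖ ^ 2 ≤ (∫ s in a..b, ‖f' s‖) ^ 2 := by
        rw [← hFTC]
        exact pow_le_pow_left₀ (norm_nonneg _) (norm_integral_le_integral_norm hab) 2
    _ ≤ (b - a) * ∫ s in a..b, ‖f' s‖ ^ 2 :=
        sq_intervalIntegral_le_mul_integral_sq hab hf'.norm.intervalIntegrable
          (hf'.norm.pow 2).intervalIntegrable
    _ ≤ (b - a) * ∫ s in a..b, g s := by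
        gcongr
        exact integral_mono_on hab (hf'.norm.pow 2).intervalIntegrable hg.intervalIntegrable
            fun s hs => hf'g s (uIcc_of_le hab ▸ hs)

lemma mul_integral_norm_sq_add_norm_sq_le_inner_sub {H : Type*} [NormedAddCommGroup H]
    [InnerProductSpace ℝ H] {y z y' z' : ℝ → H} {a b k : ℝ} (hab : a ≤ b)
    (hy : ∀ s ∈ Icc a b, HasDerivAt y (y' s) s) (hz : ∀ s ∈ Icc a b, HasDerivAt z (z' s) s)
    (hdissipation : ∀ s ∈ Icc a b, ⟪y s, z' s⟫ + ⟪y' s, z s⟫ ≤ -k * (‖y s‖ ^ 2 + ‖z s‖ ^ 2)) :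
    k * ∫ s in a..b, (‖y s‖ ^ 2 + ‖z s‖ ^ 2) ≤ ⟪y a, z a⟫ - ⟪y b, z b⟫ := by
  have hyc : ContinuousOn y (Icc a b) := fun s hs => (hy s hs).continuousAt.continuousWithinAt
  have hzc : ContinuousOn z (Icc a b) := fun s hs => (hz s hs).continuousAt.continuousWithinAt
  have := integral_le_sub_of_hasDeriv_right_of_le hab (g := fun s => -⟪y s, z s⟫)
    (φ := fun s => k * (‖y s‖ ^ 2 + ‖z s‖ ^ 2)) (hyc.inner hzc).neg
    (fun s hs => ((hy s (Ioo_subset_Icc_self hs)).inner ℝ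
      (hz s (Ioo_subset_Icc_self hs))).neg.hasDerivWithinAt)
    (continuousOn_const.mul ((hyc.norm.pow 2).add (hzc.norm.pow 2))).integrableOn_Icc
    (fun s hs => by linarith [hdissipation s (Ioo_subset_Icc_self hs)])
  rw [integral_const_mul] at this
  linarith

lemma norm_sq_le_div_mul_inner {H : Type*} [NormedAddCommGroup H] [InnerProductSpace ℝ H]
    {ν M : ℝ} (hν : 0 < ν) {g w : H}
    (hlow : ν * ‖w‖ ^ 2 ≤ ⟪g, w⟫) (hup : ‖g‖ ≤ M * ‖w‖) :
    ‖g‖ ^ 2 ≤ M ^ 2 / ν * ⟪g, w⟫ := by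
  have hsq : ‖g‖ ^ 2 ≤ M ^ 2 * ‖w‖ ^ 2 := by
    rw [← mul_pow]; exact pow_le_pow_left₀ (norm_nonneg g) hup 2
  calc ‖g‖ ^ 2 ≤ M ^ 2 / ν * (ν * ‖w‖ ^ 2) := by field_simp; exact hsq
    _ ≤ M ^ 2 / ν * ⟪g, w⟫ := by gcongr

section

variable {H : Type*} [NormedAddCommGroup H] [InnerProductSpace ℝ H] [CompleteSpace H]

lemma inner_gradient_eq_fderiv_apply (G : H → ℝ) (w u : H) :
    ⟪gradient G w, u⟫ = fderiv ℝ G w u := by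
  rw [← toDual_gradient]; rfl

lemma inner_gradient_sub_gradient_ge {G : H → ℝ} {c : ℝ} (hG : ContDiff ℝ 2 G)
    (hlow : ∀ x ξ : H, c * ‖ξ‖ ^ 2 ≤ fderiv ℝ (fun y => fderiv ℝ G y) x ξ ξ) (v w : H) :
    c * ‖w - v‖ ^ 2 ≤ ⟪gradient G w - gradient G v, w - v⟫ := by
  have hDG : Differentiable ℝ (fderiv ℝ G) :=
    (hG.fderiv_right (m := 1) (by norm_num)).differentiable one_ne_zero
  have hderiv : ∀ s : ℝ, HasDerivAt (fun s : ℝ => fderiv ℝ G (v + s • (w - v)) (w - v))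
      (fderiv ℝ (fun y => fderiv ℝ G y) (v + s • (w - v)) (w - v) (w - v)) s := by
    intro s
    have hline : HasDerivAt (fun s : ℝ => v + s • (w - v)) (w - v) s := by
      simpa using ((hasDerivAt_id s).smul_const (w - v)).const_add v
    simpa using
      ((hDG _).hasFDerivAt.comp_hasDerivAt s hline).clm_apply (hasDerivAt_const s (w - v))
  obtain ⟨s, -, hs⟩ := exists_hasDerivAt_eq_slope _ _ zero_lt_one
    (fun s _ => (hderiv s).continuousAt.continuousWithinAt) (fun s _ => hderiv s)
  calc c * ‖w - v‖ ^ 2 ≤ _ := hlow (v + s • (w - v)) (w - v)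
    _ = ⟪gradient G w - gradient G v, w - v⟫ := by
      rw [hs, inner_sub_left, inner_gradient_eq_fderiv_apply, inner_gradient_eq_fderiv_apply]
      simp

lemma real_inner_gradient_self_ge {G : H → ℝ} {c : ℝ} (hG : ContDiff ℝ 2 G)
    (h0 : gradient G 0 = 0)
    (hlow : ∀ x ξ : H, c * ‖ξ‖ ^ 2 ≤ fderiv ℝ (fun y => fderiv ℝ G y) x ξ ξ) (w : H) :
    c * ‖w‖ ^ 2 ≤ ⟪gradient G w, w⟫ := by
  simpa [h0] using inner_gradient_sub_gradient_ge hG hlow 0 w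

lemma inner_neg_adjoint_add_le {L S : H →L[ℝ] H} {b ν m k : ℝ} (hkν : k < ν)
    (hYoung : b ^ 2 / 16 ≤ (m - k) * (ν - k)) {y z a g : H}
    (ha : ‖a - L y‖ ≤ b / 2 * ‖y‖) (hg : ν * ‖y‖ ^ 2 ≤ ⟪g, y⟫)
    (hS : m * ‖z‖ ^ 2 ≤ ⟪S z, z⟫) :
    ⟪y, -(adjoint L z + g)⟫ + ⟪a - S z, z⟫ ≤ -k * (‖y‖ ^ 2 + ‖z‖ ^ 2) := by
  have hsplit : ⟪y, -(adjoint L z + g)⟫ + ⟪a - S z, z⟫ =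
      ⟪a - L y, z⟫ - ⟪S z, z⟫ - ⟪g, y⟫ := by
    rw [inner_neg_right, inner_add_right, adjoint_inner_right, inner_sub_left, inner_sub_left,
      real_inner_comm g y]
    ring
  have hcross : ⟪a - L y, z⟫ ≤ b / 2 * (‖y‖ * ‖z‖) :=
    (real_inner_le_norm _ _).trans (by nlinarith [norm_nonneg z])
  have := half_mul_mul_le_mul_sq_add_mul_sq (sub_pos.2 hkν) hYoung ‖y‖ ‖z‖
  rw [hsplit]
  nlinarith

lemma norm_adjoint_apply_add_sq_le {L : H →L[ℝ] H} {γ M : ℝ} (hL : ‖L‖ ≤ γ) {y z g : H}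
    (hg : ‖g‖ ≤ M * ‖y‖) :
    ‖adjoint L z + g‖ ^ 2 ≤ (γ ^ 2 + M ^ 2) * (‖y‖ ^ 2 + ‖z‖ ^ 2) := by
  have hLz : ‖adjoint L z‖ ≤ γ * ‖z‖ :=
    ((adjoint L).le_opNorm z).trans (by rw [LinearIsometryEquiv.norm_map]; gcongr)
  have := (norm_add_le _ _).trans (add_le_add hLz hg)
  nlinarith [norm_nonneg (adjoint L z + g), sq_nonneg (γ * ‖y‖ - M * ‖z‖)]

end

theorem stmt10_general
    {H : Type*} [NormedAddCommGroup H] [InnerProductSpace ℝ H] [CompleteSpace H]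
    (A : H → H) (F F_T : H → ℝ) (S : H →L[ℝ] H)
    (γ b ν M ν_T M_T m k : ℝ)
    (hνT : 0 < ν_T) (hk : 0 < k) (hkmin : k < min m ν)
    (hYoung : b ^ 2 / 16 < (m - k) * (ν - k))
    (hC1 : ContDiff ℝ 1 A)
    (hDA : ∀ x : H, ‖fderiv ℝ A x‖ ≤ γ)
    (hAquad : ∀ x : H, ‖A x - fderiv ℝ A x x‖ ≤ (b / 2) * ‖x‖)
    (hFC2 : ContDiff ℝ 2 F) (hFTC2 : ContDiff ℝ 2 F_T)
    (hDF0 : gradient F 0 = 0) (hDFT0 : gradient F_T 0 = 0)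
    (hFlow : ∀ x ξ : H, ν * ‖ξ‖ ^ 2 ≤ fderiv ℝ (fun y => fderiv ℝ F y) x ξ ξ)
    (hFTlow : ∀ x ξ : H, ν_T * ‖ξ‖ ^ 2 ≤ fderiv ℝ (fun y => fderiv ℝ F_T y) x ξ ξ)
    (hDFbd : ∀ x : H, ‖gradient F x‖ ≤ M * ‖x‖)
    (hDFTbd : ∀ x : H, ‖gradient F_T x‖ ≤ M_T * ‖x‖)
    (hScoer : ∀ ξ : H, m * ‖ξ‖ ^ 2 ≤ ⟪S ξ, ξ⟫)
    (t T : ℝ) (htT : t ≤ T) (x : H)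
    (y z : ℝ → H)
    (hy : ∀ s ∈ Icc t T, HasDerivAt y (A (y s) - S (z s)) s)
    (hz : ∀ s ∈ Icc t T,
      HasDerivAt z (-((adjoint (fderiv ℝ A (y s))) (z s) + gradient F (y s))) s)
    (hyt : y t = x) (hzT : z T = gradient F_T (y T)) :
    ‖z t‖ ≤ ‖x‖ * (M_T ^ 2 / ν_T + (γ ^ 2 + M ^ 2) * (T - t) / k) := by
  set w : ℝ → H := fun s => adjoint (fderiv ℝ A (y s)) (z s) + gradient F (y s)
  set e : ℝ → ℝ := fun s => ‖y s‖ ^ 2 + ‖z s‖ ^ 2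
  have hyc : ContinuousOn y (Icc t T) := fun s hs => (hy s hs).continuousAt.continuousWithinAt
  have hzc : ContinuousOn z (Icc t T) := fun s hs => (hz s hs).continuousAt.continuousWithinAt
  have hwc : ContinuousOn w (Icc t T) :=
    ((LinearIsometryEquiv.continuous adjoint).comp (hC1.continuous_fderiv one_ne_zero)
      |>.comp_continuousOn hyc |>.clm_apply hzc).add
    (((InnerProductSpace.toDual ℝ H).symm.continuous.comp
      (hFC2.continuous_fderiv two_ne_zero)).comp_continuousOn hyc)
  have hterminal : ‖z T‖ ^ 2 ≤ M_T ^ 2 / ν_T * ⟪z T, y T⟫ :=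
    hzT ▸ norm_sq_le_div_mul_inner hνT (real_inner_gradient_self_ge hFTC2 hDFT0 hFTlow _)
      (hDFTbd _)
  have hinner_terminal_nonneg : 0 ≤ ⟪z T, y T⟫ :=
    hzT ▸ (real_inner_gradient_self_ge hFTC2 hDFT0 hFTlow _).trans' (by positivity)
  have henergy : k * ∫ s in t..T, e s ≤ ⟪x, z t⟫ - ⟪y T, z T⟫ :=
    hyt ▸ mul_integral_norm_sq_add_norm_sq_le_inner_sub htT hy hz fun s _ =>
      inner_neg_adjoint_add_le (hkmin.trans_le (min_le_right _ _)) hYoung.le (hAquad (y s))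
        (real_inner_gradient_self_ge hFC2 hDF0 hFlow (y s)) (hScoer (z s))
  have hdrift : ‖z t - z T‖ ^ 2 ≤ (γ ^ 2 + M ^ 2) * (T - t) / k * (k * ∫ s in t..T, e s) := by
    have := norm_sub_sq_le_mul_integral_of_norm_deriv_sq_le htT hz hwc.neg
      (g := fun s => (γ ^ 2 + M ^ 2) * e s)
      (continuousOn_const.mul ((hyc.norm.pow 2).add (hzc.norm.pow 2))) fun s _ =>
        (norm_neg (w s)).symm ▸ norm_adjoint_apply_add_sq_le (hDA _) (hDFbd _)
    rw [norm_sub_rev, integral_const_mul] at this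
    convert this using 1
    field_simp
  refine le_mul_add_of_sq_le (norm_nonneg x) (norm_nonneg _) (norm_nonneg _) (norm_nonneg _)
    (by positivity) (by have := sub_nonneg.2 htT; positivity) hinner_terminal_nonneg
    (mul_nonneg hk.le (integral_nonneg htT fun s _ => by positivity)) (norm_le_insert' _ (z T))
    hterminal hdrift ?_
  linarith [real_inner_le_norm x (z t), real_inner_comm (z T) (y T)]

theorem stmt10
    {H : Type*} [NormedAddCommGroup H] [InnerProductSpace ℝ H] [CompleteSpace H]
    (A : H → H) (F F_T : H → ℝ) (S : H →L[ℝ] H)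
    (γ b ν M ν_T M_T m k : ℝ)
    (hγ : 0 < γ) (hb : 0 < b) (hν : 0 < ν) (hM : 0 < M) (hνT : 0 < ν_T)
    (hMT : 0 < M_T) (hm : 0 < m) (hk : 0 < k) (hkmin : k < min m ν)
    (hYoung : b ^ 2 / 16 < (m - k) * (ν - k))
    (hC1 : ContDiff ℝ 1 A) (hA0 : A 0 = 0)
    (hDA : ∀ x : H, ‖fderiv ℝ A x‖ ≤ γ)
    (hAquad : ∀ x : H, ‖A x - fderiv ℝ A x x‖ ≤ (b / 2) * ‖x‖)
    (hFC2 : ContDiff ℝ 2 F) (hFTC2 : ContDiff ℝ 2 F_T)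
    (hDF0 : gradient F 0 = 0) (hDFT0 : gradient F_T 0 = 0)
    (hFlow : ∀ x ξ : H, ν * ‖ξ‖ ^ 2 ≤ fderiv ℝ (fun y => fderiv ℝ F y) x ξ ξ)
    (hFup : ∀ x ξ : H, fderiv ℝ (fun y => fderiv ℝ F y) x ξ ξ ≤ M * ‖ξ‖ ^ 2)
    (hFTlow : ∀ x ξ : H, ν_T * ‖ξ‖ ^ 2 ≤ fderiv ℝ (fun y => fderiv ℝ F_T y) x ξ ξ)
    (hFTup : ∀ x ξ : H, fderiv ℝ (fun y => fderiv ℝ F_T y) x ξ ξ ≤ M_T * ‖ξ‖ ^ 2)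
    (hDFbd : ∀ x : H, ‖gradient F x‖ ≤ M * ‖x‖)
    (hDFTbd : ∀ x : H, ‖gradient F_T x‖ ≤ M_T * ‖x‖)
    (hSsa : ∀ ξ η : H, ⟪S ξ, η⟫ = ⟪ξ, S η⟫)
    (hScoer : ∀ ξ : H, m * ‖ξ‖ ^ 2 ≤ ⟪S ξ, ξ⟫)
    (t T : ℝ) (htT : t ≤ T) (x : H)
    (y z : ℝ → H)
    (hy : ∀ s ∈ Icc t T, HasDerivAt y (A (y s) - S (z s)) s)
    (hz : ∀ s ∈ Icc t T,
      HasDerivAt z (-((adjoint (fderiv ℝ A (y s))) (z s) + gradient F (y s))) s)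
    (hyt : y t = x) (hzT : z T = gradient F_T (y T)) :
    ‖z t‖ ≤ ‖x‖ * (M_T ^ 2 / ν_T + (γ ^ 2 + M ^ 2) * (T - t) / k) :=
  stmt10_general A F F_T S γ b ν M ν_T M_T m k hνT hk hkmin hYoung hC1 hDA hAquad hFC2 hFTC2 hDF0
    hDFT0 hFlow hFTlow hDFbd hDFTbd hScoer t T htT x y z hy hz hyt hzT
end

section
/- Let A : ℝⁿ → ℝⁿ be continuously differentiable with ‖dA(x)‖ ≤ k for all x. Extend A to H_m = L²_m(ℝⁿ;ℝⁿ) by (A(X))(x) = A(X(x)). Then the extended map is Gâteaux differentiable on H_m with derivative (D_X A(X) Y)(x) = dA(X(x)) Y(x) for all X, Y ∈ H_m. -/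
open MeasureTheory Filter
open scoped RealInnerProductSpace Topology NNReal

/-! The difference quotients `ε⁻¹ • (A (X x + ε • Y x) - A (X x))` converge pointwise to
`dA(X x) (Y x)` and, A being `k`-Lipschitz, are bounded by `k ‖Y x‖`. Paired with `H ∈ L²`
they are dominated by the integrable function `k ‖Y‖ ‖H‖` (Cauchy–Schwarz in `L²`), so dominated
convergence passes the limit through the integral. -/

section

variable {E F : Type*} [NormedAddCommGroup E] [NormedSpace ℝ E]

lemma LipschitzWith.norm_inv_smul_sub_le [NormedAddCommGroup F] [NormedSpace ℝ F] {A : E → F}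
    {K : ℝ≥0} (hA : LipschitzWith K A) (x y : E) (ε : ℝ) :
    ‖ε⁻¹ • (A (x + ε • y) - A x)‖ ≤ K * ‖y‖ := by
  rcases eq_or_ne ε 0 with rfl | hε
  · simp only [inv_zero, zero_smul, norm_zero]
    positivity
  calc ‖ε⁻¹ • (A (x + ε • y) - A x)‖ = |ε|⁻¹ * ‖A (x + ε • y) - A x‖ := by
        rw [norm_smul, Real.norm_eq_abs, abs_inv]
    _ ≤ |ε|⁻¹ * (K * (|ε| * ‖y‖)) := by
        gcongr
        simpa [norm_smul] using hA.norm_sub_le (x + ε • y) x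
    _ = K * ‖y‖ := by field_simp

variable {α : Type*} [MeasurableSpace α] {μ : Measure α}

theorem tendsto_integral_inner_slope_of_lipschitzWith [NormedAddCommGroup F]
    [InnerProductSpace ℝ F] {A : E → F} {K : ℝ≥0} (hAd : Differentiable ℝ A)
    (hAL : LipschitzWith K A)
    {X Y : α → E} {H : α → F} (hX : AEStronglyMeasurable X μ) (hY : MemLp Y 2 μ)
    (hH : MemLp H 2 μ) :
    Tendsto (fun ε : ℝ => ∫ x, ⟪ε⁻¹ • (A (X x + ε • Y x) - A (X x)), H x⟫ ∂μ) (𝓝[≠] 0)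
      (𝓝 (∫ x, ⟪fderiv ℝ A (X x) (Y x), H x⟫ ∂μ)) := by
  refine tendsto_integral_filter_of_dominated_convergence (fun x => K * (‖Y x‖ * ‖H x‖))
    (Eventually.of_forall fun ε => ?_) (Eventually.of_forall fun ε => ?_)
    ((hY.norm.integrable_mul hH.norm).const_mul _) (Eventually.of_forall fun x => ?_)
  · have hA := hAd.continuous
    exact (((hA.comp_aestronglyMeasurable (hX.add (hY.1.const_smul ε))).sub
      (hA.comp_aestronglyMeasurable hX)).const_smul ε⁻¹).inner hH.1
  · refine Eventually.of_forall fun x => ?_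
    calc ‖⟪ε⁻¹ • (A (X x + ε • Y x) - A (X x)), H x⟫‖
        ≤ ‖ε⁻¹ • (A (X x + ε • Y x) - A (X x))‖ * ‖H x‖ := norm_inner_le_norm _ _
      _ ≤ K * ‖Y x‖ * ‖H x‖ := by gcongr; exact hAL.norm_inv_smul_sub_le _ _ _
      _ = K * (‖Y x‖ * ‖H x‖) := mul_assoc _ _ _
  · exact (((hAd (X x)).hasFDerivAt.hasLineDerivAt (Y x)).tendsto_slope_zero).inner
      tendsto_const_nhds

end

theorem stmt17_general {n : ℕ}
    (m : Measure (EuclideanSpace ℝ (Fin n)))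
    (A : EuclideanSpace ℝ (Fin n) → EuclideanSpace ℝ (Fin n))
    (k : ℝ)
    (hC1 : ContDiff ℝ 1 A) (hdA : ∀ x, ‖fderiv ℝ A x‖ ≤ k)
    (X Y : EuclideanSpace ℝ (Fin n) → EuclideanSpace ℝ (Fin n))
    (hX : MemLp X 2 m) (hY : MemLp Y 2 m) :
    ∀ Hf : EuclideanSpace ℝ (Fin n) → EuclideanSpace ℝ (Fin n), MemLp Hf 2 m →
      Tendsto
        (fun ε : ℝ => (1 / ε) * ∫ x, ⟪A (X x + ε • Y x) - A (X x), Hf x⟫ ∂m)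
        (𝓝[≠] (0 : ℝ))
        (𝓝 (∫ x, ⟪fderiv ℝ A (X x) (Y x), Hf x⟫ ∂m)) := by
  intro Hf hHf
  have hAd : Differentiable ℝ A := hC1.differentiable one_ne_zero
  have hAL : LipschitzWith k.toNNReal A :=
    lipschitzWith_of_nnnorm_fderiv_le hAd fun x => by
      simpa [← NNReal.coe_le_coe] using (hdA x).trans (le_max_left k 0)
  have hquot (ε : ℝ) : (1 / ε) * ∫ x, ⟪A (X x + ε • Y x) - A (X x), Hf x⟫ ∂m
      = ∫ x, ⟪ε⁻¹ • (A (X x + ε • Y x) - A (X x)), Hf x⟫ ∂m := by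
    simp only [one_div, ← integral_const_mul, real_inner_smul_left]
  simpa only [hquot] using
    tendsto_integral_inner_slope_of_lipschitzWith hAd hAL hX.aestronglyMeasurable hY hHf

theorem stmt17 {n : ℕ}
    (m : Measure (EuclideanSpace ℝ (Fin n))) [IsProbabilityMeasure m]
    (A : EuclideanSpace ℝ (Fin n) → EuclideanSpace ℝ (Fin n))
    (k : ℝ) (hk : 0 < k)
    (hC1 : ContDiff ℝ 1 A) (hdA : ∀ x, ‖fderiv ℝ A x‖ ≤ k)
    (X Y : EuclideanSpace ℝ (Fin n) → EuclideanSpace ℝ (Fin n))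
    (hX : MemLp X 2 m) (hY : MemLp Y 2 m) :
    ∀ Hf : EuclideanSpace ℝ (Fin n) → EuclideanSpace ℝ (Fin n), MemLp Hf 2 m →
      Tendsto
        (fun ε : ℝ => (1 / ε) * ∫ x, ⟪A (X x + ε • Y x) - A (X x), Hf x⟫ ∂m)
        (𝓝[≠] (0 : ℝ))
        (𝓝 (∫ x, ⟪fderiv ℝ A (X x) (Y x), Hf x⟫ ∂m)) :=
  stmt17_general m A k hC1 hdA X Y hX hY
end
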